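/- arXiv:2008.10666 — 7 statements merged into one kernel-verified Lean document; each statement's English description precedes it below -/
import Mathlib

section
/- Let M_n be the n×n matrix with entries (M_n)_{ij} = 1 if i + j ≤ n and (M_n)_{ij} = -1 if i + j > n (indices 1 ≤ i, j ≤ n). Then for every integer n ≥ 2, det(M_n) = (-1)^n · 2 · det(M_{n-1}). -/
/-!
Subtracting the second-to-last column of `M_n` from the last one (which is constantly `-1`)
leaves `-2` in the first row and `0` elsewhere. Expanding along that column gives
`(-1)^(1 + n) · (-2)` times the minor obtained by deleting the first row and last column,
and that minor is `M_{n-1}`.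
-/

/-- The n×n matrix with entries `1` if `i + j ≤ n` and `-1` otherwise,
for 1-based indices `1 ≤ i, j ≤ n`. -/
def Mmat (n : ℕ) : Matrix (Fin n) (Fin n) ℝ :=
  fun i j => if (i : ℕ) + 1 + ((j : ℕ) + 1) ≤ n then 1 else -1

namespace Matrix

variable {R : Type*} [CommRing R] {n : ℕ}

theorem det_updateCol_single (A : Matrix (Fin (n + 1)) (Fin (n + 1)) R) (i j : Fin (n + 1))
    (c : R) :
    (A.updateCol j (Pi.single i c)).det =
      (-1) ^ (i + j : ℕ) * c * (A.submatrix i.succAbove j.succAbove).det := by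
  rw [det_succ_column _ j, Fintype.sum_eq_single i fun k hk => by simp [Pi.single_eq_of_ne hk],
    updateCol_self, Pi.single_eq_same, submatrix_updateCol_succAbove]

end Matrix

theorem Mmat_col_last_sub_col_castSucc_last (m : ℕ) :
    (fun i => Mmat (m + 2) i (Fin.last (m + 1)) + (-1 : ℝ) • Mmat (m + 2) i (Fin.last m).castSucc)
      = Pi.single 0 (-2) := by
  ext i
  simp only [Mmat, Pi.single_apply, Fin.val_last, Fin.val_castSucc, Fin.ext_iff, Fin.val_zero]
  split_ifs <;> first | omega | norm_num

theorem Mmat_submatrix_succ_castSucc (m : ℕ) :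
    (Mmat (m + 2)).submatrix Fin.succ Fin.castSucc = Mmat (m + 1) := by
  ext i j
  simp only [Mmat, Matrix.submatrix_apply, Fin.val_succ, Fin.val_castSucc]
  congr 1
  simp only [eq_iff_iff]
  omega

theorem stmt_0 (n : ℕ) (hn : 2 ≤ n) :
    (Mmat n).det = (-1 : ℝ) ^ n * 2 * (Mmat (n - 1)).det := by
  obtain ⟨m, rfl⟩ : ∃ m, n = m + 2 := ⟨n - 2, by omega⟩
  have hne : Fin.last (m + 1) ≠ (Fin.last m).castSucc := (Fin.castSucc_lt_last _).ne'
  rw [← Matrix.det_updateCol_add_smul_self (Mmat (m + 2)) hne (-1),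
    Mmat_col_last_sub_col_castSucc_last, Matrix.det_updateCol_single, Fin.succAbove_zero,
    Fin.succAbove_last, Mmat_submatrix_succ_castSucc]
  simp only [Fin.val_zero, Fin.val_last, zero_add, Nat.add_succ_sub_one]
  ring
end

section
/- Let M_n be the n×n matrix with entries (M_n)_{ij} = 1 if i + j ≤ n and (M_n)_{ij} = -1 if i + j > n (indices 1 ≤ i, j ≤ n). Then for every integer n > 3, det(M_n) = (-1)^{∑_{l=4}^{n} l} · 2^{n-3} · 4, where ∑_{l=4}^{n} l = n(n+1)/2 - 6. -/
/-!
With `A` the 0/1 matrix carrying the ones on and below the antidiagonal and `J` the all-ones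
matrix, `M_n = J - 2A`. Since the last column of `A` is all ones, `J = A L` where `L` has ones
in its last row and zeros elsewhere, so `M_n = A (L - 2)`. Expanding along the first row gives
`det A = (-1)^(n-1) det A_{n-1}`, and `L - 2` is lower triangular with diagonal
`(-2, …, -2, -1)`; hence `det M_n = (-1)^(0 + 1 + ⋯ + n) 2^(n-1)`.
-/

open Matrix Finset

namespace Matrix

variable {R : Type*} [CommRing R]

def antidiagOnes (n : ℕ) : Matrix (Fin n) (Fin n) R :=
  of fun i j => if n ≤ (i : ℕ) + j + 1 then 1 else 0

def lastRowOnes (m : ℕ) : Matrix (Fin (m + 1)) (Fin (m + 1)) R :=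
  of fun i _ => if i = Fin.last m then 1 else 0

theorem det_antidiagOnes_succ (m : ℕ) :
    (antidiagOnes (m + 1) : Matrix _ _ R).det = (-1) ^ m * (antidiagOnes m).det := by
  have hminor : (antidiagOnes (m + 1) : Matrix _ _ R).submatrix Fin.succ (Fin.last m).succAbove
      = antidiagOnes m := by
    ext i j
    simp only [antidiagOnes, submatrix_apply, Fin.succAbove_last, of_apply, Fin.val_succ,
      Fin.val_castSucc]
    exact if_congr (by omega) rfl rfl
  have hcorner : (antidiagOnes (m + 1) : Matrix _ _ R) 0 (Fin.last m) = 1 := by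
    simp [antidiagOnes]
  rw [det_succ_row_zero, Fintype.sum_eq_single (Fin.last m), hminor, hcorner, Fin.val_last,
    mul_one]
  intro j hj
  have hjm : (j : ℕ) < m := Fin.val_lt_last hj
  have hzero : (antidiagOnes (m + 1) : Matrix _ _ R) 0 j = 0 := by
    simp only [antidiagOnes, of_apply, Fin.val_zero]
    exact if_neg (by omega)
  rw [hzero, mul_zero, zero_mul]

theorem det_antidiagOnes (n : ℕ) :
    (antidiagOnes n : Matrix _ _ R).det = (-1) ^ ∑ k ∈ range n, k := by
  induction n with
  | zero => simp
  | succ m ih => rw [det_antidiagOnes_succ, ih, sum_range_succ, pow_add, mul_comm]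

theorem antidiagOnes_mul_lastRowOnes (m : ℕ) :
    (antidiagOnes (m + 1) : Matrix _ _ R) * lastRowOnes m = of fun _ _ => 1 := by
  ext i j
  simp [mul_apply, antidiagOnes, lastRowOnes]

theorem det_lastRowOnes_sub_two (m : ℕ) :
    (lastRowOnes m - 2 : Matrix (Fin (m + 1)) (Fin (m + 1)) R).det = (-2) ^ m * (-1) := by
  have hlower : (lastRowOnes m - 2 : Matrix (Fin (m + 1)) (Fin (m + 1)) R).IsLowerTriangular := by
    intro i j hij
    have hij : i < j := hij
    have hi : i ≠ Fin.last m := Fin.lt_last_iff_ne_last.mp (hij.trans_le (Fin.le_last j))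
    simp [lastRowOnes, ofNat_apply, hi, hij.ne]
  rw [det_of_isLowerTriangular _ hlower, Fin.prod_univ_castSucc]
  norm_num [lastRowOnes, ofNat_apply, Fin.castSucc_ne_last]

end Matrix

theorem Mmat_eq_antidiagOnes_mul (m : ℕ) :
    Mmat (m + 1) = antidiagOnes (m + 1) * (lastRowOnes m - 2) := by
  rw [mul_sub, antidiagOnes_mul_lastRowOnes]
  ext i j
  simp only [Mmat, antidiagOnes, Matrix.sub_apply, mul_two, Matrix.add_apply, of_apply]
  split_ifs <;> first | omega | norm_num

theorem det_Mmat_succ (m : ℕ) :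
    (Mmat (m + 1)).det = (-1) ^ (∑ k ∈ range (m + 2), k) * 2 ^ m := by
  rw [Mmat_eq_antidiagOnes_mul, det_mul, det_antidiagOnes, det_lastRowOnes_sub_two,
    sum_range_succ _ (m + 1), pow_add, neg_pow (2 : ℝ)]
  ring

theorem sum_range_id_succ_eq_sum_Icc_four_add (n : ℕ) (hn : 3 ≤ n) :
    ∑ k ∈ range (n + 1), k = ∑ l ∈ Icc 4 n, l + 6 := by
  rw [range_eq_Ico, ← sum_Ico_consecutive _ (by omega : 0 ≤ 4) (by omega : 4 ≤ n + 1),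
    Ico_add_one_right_eq_Icc, add_comm]
  rfl

theorem sum_Icc_four_id (n : ℕ) (hn : 3 ≤ n) : ∑ l ∈ Icc 4 n, l = n * (n + 1) / 2 - 6 := by
  have hgauss := sum_range_id_mul_two (n + 1)
  rw [sum_range_id_succ_eq_sum_Icc_four_add n hn, Nat.add_sub_cancel, mul_comm (n + 1)] at hgauss
  omega

theorem stmt_1 (n : ℕ) (hn : 3 < n) :
    (Mmat n).det = (-1 : ℝ) ^ (∑ l ∈ Finset.Icc 4 n, l) * 2 ^ (n - 3) * 4 ∧
    (∑ l ∈ Finset.Icc 4 n, l) = n * (n + 1) / 2 - 6 := by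
  refine ⟨?_, sum_Icc_four_id n hn.le⟩
  obtain ⟨k, rfl⟩ : ∃ k, n = k + 4 := ⟨n - 4, by omega⟩
  rw [det_Mmat_succ (k + 3), sum_range_id_succ_eq_sum_Icc_four_add (k + 4) (by omega), pow_add,
    show k + 4 - 3 = k + 1 by omega]
  ring
end

section
/- Let ν ∈ [0,1) and χ ∈ (0,1), and define h = (1/4) log( (χ/(1-χ) + ν) / (1/χ - (1-ν)) ) and J = (1/4) log( 1 + ν/((1-ν)^2 χ (1-χ)) ). Then, with Λ(x) = e^{2x}/(1+e^{2x}), one has Λ(h + J) = ν + (1-ν)χ and Λ(h - J) = (1-ν)χ. Consequently, for N = 1 the Kinetic Ising Model with parameters (J, h) has exactly the same transition probabilities as the DAR(1) process with parameters (ν, χ): for all X, X' ∈ {0,1}, Λ((2X-1)(h + J(2X'-1))) = ν δ_{X,X'} + (1-ν) χ^X (1-χ)^{1-X}. -/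
/-- The logistic function `Λ(x) = e^{2x}/(1 + e^{2x})`. -/
noncomputable def Lam (x : ℝ) : ℝ := Real.exp (2 * x) / (1 + Real.exp (2 * x))

/-!
`Λ` inverts `p ↦ ½ log (p / (1 - p))`, so it suffices to show that `h + J` and `h - J` are half
the log-odds of `a = ν + (1 - ν) χ` and `b = (1 - ν) χ`. This holds because, writing
`odds p = p / (1 - p)`, the arguments of the two logarithms are `odds a * odds b` and
`odds a / odds b`. The transition probabilities then agree case by case, using
`Λ (-x) = 1 - Λ x` for `X = 0`.
-/

open Real

lemma Lam_half_log_odds {p : ℝ} (hp0 : 0 < p) (hp1 : p < 1) :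
    Lam (log (p / (1 - p)) / 2) = p := by
  have hq : 0 < 1 - p := by linarith
  rw [Lam, mul_div_cancel₀ _ two_ne_zero, exp_log (by positivity)]
  field_simp
  ring

lemma Lam_neg (x : ℝ) : Lam (-x) = 1 - Lam x := by
  have hx : 0 < exp (2 * x) := exp_pos _
  rw [Lam, Lam, mul_neg, exp_neg]
  field_simp
  ring

lemma quarter_log_mul_add_quarter_log_div {x y : ℝ} (hx : 0 < x) (hy : 0 < y) :
    1 / 4 * log (x * y) + 1 / 4 * log (x / y) = log x / 2 := by
  rw [log_mul hx.ne' hy.ne', log_div hx.ne' hy.ne']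
  ring

lemma quarter_log_mul_sub_quarter_log_div {x y : ℝ} (hx : 0 < x) (hy : 0 < y) :
    1 / 4 * log (x * y) - 1 / 4 * log (x / y) = log y / 2 := by
  rw [log_mul hx.ne' hy.ne', log_div hx.ne' hy.ne']
  ring

section DAR

variable {ν χ : ℝ}

lemma dar_field_arg_eq_odds_mul_odds (hν0 : 0 ≤ ν) (hν1 : ν < 1) (hχ0 : 0 < χ) (hχ1 : χ < 1) :
    (χ / (1 - χ) + ν) / (1 / χ - (1 - ν)) =
      (ν + (1 - ν) * χ) / (1 - (ν + (1 - ν) * χ)) * ((1 - ν) * χ / (1 - (1 - ν) * χ)) := by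
  have hν' : 0 < 1 - ν := by linarith
  have hχ' : 0 < 1 - χ := by linarith
  have hb : 0 < 1 - (1 - ν) * χ := by nlinarith [mul_nonneg hν0 hχ0.le]
  rw [show 1 - (ν + (1 - ν) * χ) = (1 - ν) * (1 - χ) by ring]
  field_simp
  ring

lemma dar_coupling_arg_eq_odds_div_odds (hν0 : 0 ≤ ν) (hν1 : ν < 1) (hχ0 : 0 < χ) (hχ1 : χ < 1) :
    1 + ν / ((1 - ν) ^ 2 * χ * (1 - χ)) =
      (ν + (1 - ν) * χ) / (1 - (ν + (1 - ν) * χ)) / ((1 - ν) * χ / (1 - (1 - ν) * χ)) := by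
  have hν' : 0 < 1 - ν := by linarith
  have hχ' : 0 < 1 - χ := by linarith
  have hb : 0 < 1 - (1 - ν) * χ := by nlinarith [mul_nonneg hν0 hχ0.le]
  rw [show 1 - (ν + (1 - ν) * χ) = (1 - ν) * (1 - χ) by ring]
  field_simp
  ring

open scoped Classical in
lemma kinetic_ising_eq_dar {h J : ℝ} (hplus : Lam (h + J) = ν + (1 - ν) * χ)
    (hminus : Lam (h - J) = (1 - ν) * χ) (X X' : ℝ) (hX : X = 0 ∨ X = 1)
    (hX' : X' = 0 ∨ X' = 1) :
    Lam ((2 * X - 1) * (h + J * (2 * X' - 1))) =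
      ν * (if X = X' then 1 else 0) + (1 - ν) * χ ^ X * (1 - χ) ^ (1 - X) := by
  rcases hX with rfl | rfl <;> rcases hX' with rfl | rfl
  · rw [show (2 * (0 : ℝ) - 1) * (h + J * (2 * 0 - 1)) = -(h - J) by ring, Lam_neg, hminus]
    norm_num
    ring
  · rw [show (2 * (0 : ℝ) - 1) * (h + J * (2 * 1 - 1)) = -(h + J) by ring, Lam_neg, hplus]
    norm_num
    ring
  · rw [show (2 * (1 : ℝ) - 1) * (h + J * (2 * 0 - 1)) = h - J by ring, hminus]
    norm_num
  · rw [show (2 * (1 : ℝ) - 1) * (h + J * (2 * 1 - 1)) = h + J by ring, hplus]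
    norm_num

end DAR

open scoped Classical in
theorem stmt_7 (ν χ h J : ℝ) (hν : ν ∈ Set.Ico (0 : ℝ) 1) (hχ : χ ∈ Set.Ioo (0 : ℝ) 1)
    (hh : h = (1 / 4) * Real.log ((χ / (1 - χ) + ν) / (1 / χ - (1 - ν))))
    (hJ : J = (1 / 4) * Real.log (1 + ν / ((1 - ν) ^ 2 * χ * (1 - χ)))) :
    Lam (h + J) = ν + (1 - ν) * χ ∧ Lam (h - J) = (1 - ν) * χ ∧
    ∀ X X' : ℝ, (X = 0 ∨ X = 1) → (X' = 0 ∨ X' = 1) →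
      Lam ((2 * X - 1) * (h + J * (2 * X' - 1))) =
        ν * (if X = X' then 1 else 0) + (1 - ν) * χ ^ X * (1 - χ) ^ (1 - X) := by
  obtain ⟨hν0, hν1⟩ := hν
  obtain ⟨hχ0, hχ1⟩ := hχ
  set a := ν + (1 - ν) * χ
  set b := (1 - ν) * χ
  have ha0 : 0 < a := by positivity
  have ha1 : a < 1 := by nlinarith
  have hb0 : 0 < b := by nlinarith
  have hb1 : b < 1 := by nlinarith
  have hodds_a : 0 < a / (1 - a) := div_pos ha0 (by linarith)
  have hodds_b : 0 < b / (1 - b) := div_pos hb0 (by linarith)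
  rw [dar_field_arg_eq_odds_mul_odds hν0 hν1 hχ0 hχ1] at hh
  rw [dar_coupling_arg_eq_odds_div_odds hν0 hν1 hχ0 hχ1] at hJ
  have hplus : Lam (h + J) = a := by
    rw [hh, hJ, quarter_log_mul_add_quarter_log_div hodds_a hodds_b, Lam_half_log_odds ha0 ha1]
  have hminus : Lam (h - J) = b := by
    rw [hh, hJ, quarter_log_mul_sub_quarter_log_div hodds_a hodds_b, Lam_half_log_odds hb0 hb1]
  exact ⟨hplus, hminus, kinetic_ising_eq_dar hplus hminus⟩
end

section
/- Fix N ≥ 1 and suppose (J_1,...,J_N, h) ∈ ℝ^{N+1}, ν ∈ [0,1], χ ∈ [0,1], and λ_1,...,λ_N ≥ 0 with ∑_{k=1}^N λ_k = 1 satisfy, for every k = 1,...,N, the relation ν λ_k = Λ( h - ∑_{j<k} J_j + ∑_{j>k} J_j + J_k ) - Λ( h - ∑_{j<k} J_j + ∑_{j>k} J_j - J_k ), where Λ(x) = e^{2x}/(1+e^{2x}). Then ν = Λ( h + ∑_{j=1}^N J_j ) - Λ( h - ∑_{j=1}^N J_j ). -/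
open Finset

section FlipField

variable {M : Type*} [AddCommGroup M] {N : ℕ}

/-- The field `h + ∑_j J_j s_j` at the configuration whose first `m` spins are `-1` and the
others `+1`, i.e. at `X' = (0,…,0,1,…,1)` with `m` zeros. -/
def flipField (h : M) (J : Fin N → M) (m : ℕ) : M :=
  h + ∑ j ∈ univ.filter (fun j : Fin N => m ≤ (j : ℕ)), J j
    - ∑ j ∈ univ.filter (fun j : Fin N => (j : ℕ) < m), J j

variable (h : M) (J : Fin N → M)

theorem flipField_zero : flipField h J 0 = h + ∑ j, J j := by
  simp [flipField]

theorem flipField_card : flipField h J N = h - ∑ j, J j := by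
  rw [flipField, filter_false_of_mem fun j _ => Nat.not_le.mpr j.isLt,
    filter_true_of_mem fun j _ => j.isLt, sum_empty, add_zero]

theorem flipField_val (k : Fin N) :
    flipField h J k =
      h - ∑ j ∈ univ.filter (· < k), J j + ∑ j ∈ univ.filter (k < ·), J j + J k := by
  have hIci : univ.filter (fun j : Fin N => (k : ℕ) ≤ j) = insert k (univ.filter (k < ·)) := by
    ext j
    simp only [mem_filter, mem_univ, true_and, mem_insert, Fin.ext_iff, Fin.lt_def]
    omega
  rw [flipField, hIci, sum_insert (by simp)]
  simp only [Fin.val_fin_lt]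
  abel

theorem flipField_val_succ (k : Fin N) :
    flipField h J (k + 1) =
      h - ∑ j ∈ univ.filter (· < k), J j + ∑ j ∈ univ.filter (k < ·), J j - J k := by
  have hIic : univ.filter (fun j : Fin N => (j : ℕ) < k + 1) = insert k (univ.filter (· < k)) := by
    ext j
    simp only [mem_filter, mem_univ, true_and, mem_insert, Fin.ext_iff, Fin.lt_def]
    omega
  rw [flipField, hIic, sum_insert (by simp)]
  simp only [Order.add_one_le_iff, Fin.val_fin_lt]
  abel

end FlipField

theorem sum_flip_differences_eq {M G : Type*} [AddCommGroup M] [AddCommGroup G] {N : ℕ}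
    (f : M → G) (h : M) (J : Fin N → M) :
    ∑ k, (f (h - ∑ j ∈ univ.filter (· < k), J j + ∑ j ∈ univ.filter (k < ·), J j + J k)
      - f (h - ∑ j ∈ univ.filter (· < k), J j + ∑ j ∈ univ.filter (k < ·), J j - J k))
      = f (h + ∑ j, J j) - f (h - ∑ j, J j) := by
  simp only [← flipField_val, ← flipField_val_succ]
  rw [Fin.sum_univ_eq_sum_range (fun m => f (flipField h J m) - f (flipField h J (m + 1))),
    sum_range_sub', flipField_zero, flipField_card]

theorem stmt_10_general (N : ℕ) (J : Fin N → ℝ) (h ν : ℝ) (lam : Fin N → ℝ)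
    (hsum : ∑ k, lam k = 1)
    (hmatch : ∀ k : Fin N,
      ν * lam k =
        Lam (h - (∑ j ∈ Finset.univ.filter (fun j => j < k), J j)
              + (∑ j ∈ Finset.univ.filter (fun j => k < j), J j) + J k)
        - Lam (h - (∑ j ∈ Finset.univ.filter (fun j => j < k), J j)
              + (∑ j ∈ Finset.univ.filter (fun j => k < j), J j) - J k)) :
    ν = Lam (h + ∑ j, J j) - Lam (h - ∑ j, J j) := by
  calc ν = ∑ k, ν * lam k := by rw [← mul_sum, hsum, mul_one]
    _ = Lam (h + ∑ j, J j) - Lam (h - ∑ j, J j) := by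
      rw [sum_congr rfl fun k _ => hmatch k]
      exact sum_flip_differences_eq Lam h J

theorem stmt_10 (N : ℕ) (hN : 1 ≤ N) (J : Fin N → ℝ) (h ν χ : ℝ) (lam : Fin N → ℝ)
    (hν : ν ∈ Set.Icc (0 : ℝ) 1) (hχ : χ ∈ Set.Icc (0 : ℝ) 1)
    (hlam : ∀ k, 0 ≤ lam k) (hsum : ∑ k, lam k = 1)
    (hmatch : ∀ k : Fin N,
      ν * lam k =
        Lam (h - (∑ j ∈ Finset.univ.filter (fun j => j < k), J j)
              + (∑ j ∈ Finset.univ.filter (fun j => k < j), J j) + J k)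
        - Lam (h - (∑ j ∈ Finset.univ.filter (fun j => j < k), J j)
              + (∑ j ∈ Finset.univ.filter (fun j => k < j), J j) - J k)) :
    ν = Lam (h + ∑ j, J j) - Lam (h - ∑ j, J j) :=
  stmt_10_general N J h ν lam hsum hmatch
end

section
/- Fix N ≥ 1 and VDAR(1) parameters for one variable: ν ∈ [0,1), χ ∈ (0,1), and λ_1,...,λ_N ≥ 0 with ∑_{j=1}^N λ_j = 1. Then there exists a unique vector (J_1,...,J_N, h) ∈ ℝ^{N+1} such that the N+1 matching equations Λ( h - ∑_{j≤k} J_j + ∑_{j>k} J_j ) = ν ∑_{j>k} λ_j + (1-ν) χ hold for every k = 0, 1, ..., N, where Λ(x) = e^{2x}/(1+e^{2x}) (for k = 0 the equation reads Λ(h + ∑_j J_j) = ν + (1-ν)χ, and for k = N it reads Λ(h - ∑_j J_j) = (1-ν)χ). -/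
/-!
Since `Λ x = σ (2x)` for the logistic sigmoid `σ`, `Λ` is a bijection from `ℝ` onto `(0, 1)`,
and every right-hand side `ν s + (1 - ν) χ` with `s ∈ [0, 1]` lies in `(0, 1)`. So the matching
equations say exactly that the local fields `a_k = h - ∑_{j<k} J_j + ∑_{j≥k} J_j` take prescribed
values `t_k`. The map `(J, h) ↦ (a_0, …, a_N)` is a linear bijection: `a_k - a_{k+1} = 2 J_k` and
`a_0 + a_N = 2 h`, so `J_k = (t_k - t_{k+1}) / 2` and `h = (t_0 + t_N) / 2`.
-/

open Finset

lemma Lam_eq_sigmoid (x : ℝ) : Lam x = Real.sigmoid (2 * x) := by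
  rw [Lam, Real.sigmoid_def, Real.exp_neg]
  field_simp
  ring

lemma Lam_injective : Function.Injective Lam := fun x y h => by
  rw [Lam_eq_sigmoid, Lam_eq_sigmoid, Real.sigmoid_inj] at h
  linarith

lemma range_Lam : Set.range Lam = Set.Ioo 0 1 := by
  rw [← Real.range_sigmoid]
  ext p
  exact ⟨fun ⟨x, hx⟩ => ⟨2 * x, (Lam_eq_sigmoid x).symm.trans hx⟩,
    fun ⟨y, hy⟩ => ⟨y / 2, by rw [Lam_eq_sigmoid, mul_div_cancel₀ y two_ne_zero, hy]⟩⟩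

lemma mul_add_one_sub_mul_mem_Ioo {ν χ s : ℝ} (hν : ν ∈ Set.Ico (0 : ℝ) 1)
    (hχ : χ ∈ Set.Ioo (0 : ℝ) 1) (hs : s ∈ Set.Icc (0 : ℝ) 1) :
    ν * s + (1 - ν) * χ ∈ Set.Ioo (0 : ℝ) 1 := by
  obtain ⟨hν0, hν1⟩ := hν
  obtain ⟨hχ0, hχ1⟩ := hχ
  obtain ⟨hs0, hs1⟩ := hs
  constructor <;> nlinarith [mul_nonneg hν0 hs0, mul_le_mul_of_nonneg_left hs1 hν0]

section LocalField

variable {N : ℕ}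

/-- The argument of `Lam` in the `k`-th matching equation: the spins are `-1` at the sites
`j < k` and `+1` at the sites `j ≥ k`. -/
def localField (J : Fin N → ℝ) (h : ℝ) (k : ℕ) : ℝ :=
  h - (∑ j ∈ univ.filter (fun j : Fin N => (j : ℕ) < k), J j)
    + (∑ j ∈ univ.filter (fun j : Fin N => k ≤ (j : ℕ)), J j)

lemma localField_zero (J : Fin N → ℝ) (h : ℝ) : localField J h 0 = h + ∑ j, J j := by
  simp [localField]

lemma localField_self (J : Fin N → ℝ) (h : ℝ) : localField J h N = h - ∑ j, J j := by
  have hge : univ.filter (fun j : Fin N => N ≤ (j : ℕ)) = ∅ :=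
    filter_false_of_mem fun j _ => not_le.mpr j.isLt
  simp [localField, hge]

lemma filter_val_lt_succ {k : ℕ} (hk : k < N) :
    univ.filter (fun j : Fin N => (j : ℕ) < k + 1)
      = insert ⟨k, hk⟩ (univ.filter (fun j : Fin N => (j : ℕ) < k)) := by
  ext j
  simp [Fin.ext_iff]
  omega

lemma filter_le_val {k : ℕ} (hk : k < N) :
    univ.filter (fun j : Fin N => k ≤ (j : ℕ))
      = insert ⟨k, hk⟩ (univ.filter (fun j : Fin N => k + 1 ≤ (j : ℕ))) := by
  ext j
  simp [Fin.ext_iff]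
  omega

lemma localField_sub_localField_succ (J : Fin N → ℝ) (h : ℝ) {k : ℕ} (hk : k < N) :
    localField J h k - localField J h (k + 1) = 2 * J ⟨k, hk⟩ := by
  simp only [localField, filter_val_lt_succ hk, filter_le_val hk]
  rw [sum_insert (by simp), sum_insert (by simp)]
  ring

lemma existsUnique_localField_eq (t : ℕ → ℝ) :
    ∃! Jh : (Fin N → ℝ) × ℝ, ∀ k ≤ N, localField Jh.1 Jh.2 k = t k := by
  refine ⟨(fun j => (t j - t (j + 1)) / 2, (t 0 + t N) / 2), fun k hk => ?_, ?_⟩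
  · induction k with
    | zero =>
      rw [localField_zero, ← sum_div, Fin.sum_univ_eq_sum_range (fun j => t j - t (j + 1)),
        sum_range_sub']
      ring
    | succ k ih =>
      have hstep := localField_sub_localField_succ (fun j : Fin N => (t j - t (j + 1)) / 2)
        ((t 0 + t N) / 2) hk
      linarith [ih (by omega)]
  · rintro ⟨J, h⟩ hJh
    ext j
    · have hstep := localField_sub_localField_succ J h j.isLt
      rw [hJh j j.isLt.le, hJh (j + 1) j.isLt] at hstep
      simp only
      linarith
    · have h0 := hJh 0 (Nat.zero_le N)
      have hN := hJh N le_rfl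
      rw [localField_zero] at h0
      rw [localField_self] at hN
      simp only
      linarith

end LocalField

theorem stmt_11_general (N : ℕ) (ν χ : ℝ) (lam : Fin N → ℝ)
    (hν : ν ∈ Set.Ico (0 : ℝ) 1) (hχ : χ ∈ Set.Ioo (0 : ℝ) 1)
    (hlam : ∀ j, 0 ≤ lam j) (hsum : ∑ j, lam j = 1) :
    ∃! Jh : (Fin N → ℝ) × ℝ,
      ∀ k : ℕ, k ≤ N →
        Lam (Jh.2 - (∑ j ∈ Finset.univ.filter (fun j : Fin N => (j : ℕ) < k), Jh.1 j)
              + (∑ j ∈ Finset.univ.filter (fun j : Fin N => k ≤ (j : ℕ)), Jh.1 j))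
          = ν * (∑ j ∈ Finset.univ.filter (fun j : Fin N => k ≤ (j : ℕ)), lam j)
            + (1 - ν) * χ := by
  have hrhs (k : ℕ) : ν * (∑ j ∈ univ.filter (fun j : Fin N => k ≤ (j : ℕ)), lam j)
      + (1 - ν) * χ ∈ Set.range Lam := by
    rw [range_Lam]
    refine mul_add_one_sub_mul_mem_Ioo hν hχ ⟨sum_nonneg fun j _ => hlam j, ?_⟩
    exact hsum ▸ sum_le_sum_of_subset_of_nonneg (filter_subset _ _) fun j _ _ => hlam j
  choose t ht using hrhs
  refine (existsUnique_congr fun Jh => forall₂_congr fun k _ => ?_).mp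
    (existsUnique_localField_eq t)
  rw [← ht k, Lam_injective.eq_iff]
  rfl

theorem stmt_11 (N : ℕ) (hN : 1 ≤ N) (ν χ : ℝ) (lam : Fin N → ℝ)
    (hν : ν ∈ Set.Ico (0 : ℝ) 1) (hχ : χ ∈ Set.Ioo (0 : ℝ) 1)
    (hlam : ∀ j, 0 ≤ lam j) (hsum : ∑ j, lam j = 1) :
    ∃! Jh : (Fin N → ℝ) × ℝ,
      ∀ k : ℕ, k ≤ N →
        Lam (Jh.2 - (∑ j ∈ Finset.univ.filter (fun j : Fin N => (j : ℕ) < k), Jh.1 j)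
              + (∑ j ∈ Finset.univ.filter (fun j : Fin N => k ≤ (j : ℕ)), Jh.1 j))
          = ν * (∑ j ∈ Finset.univ.filter (fun j : Fin N => k ≤ (j : ℕ)), lam j)
            + (1 - ν) * χ :=
  stmt_11_general N ν χ lam hν hχ hlam hsum
end

section
/- Fix N ≥ 1, ν ∈ [0,1), χ ∈ (0,1), and λ_1,...,λ_N ≥ 0 with ∑_{j=1}^N λ_j = 1. If (J_1,...,J_N, h) ∈ ℝ^{N+1} satisfies the N+1 matching equations Λ( h - ∑_{j≤k} J_j + ∑_{j>k} J_j ) = ν ∑_{j>k} λ_j + (1-ν) χ for every k = 0, 1, ..., N, where Λ(x) = e^{2x}/(1+e^{2x}), then J_k ≥ 0 for every k = 1,...,N. -/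
/-!
Between the matching equations at `k + 1` and at `k`, the argument of `Λ` moves
from `a - J_k` to `a + J_k` while the right-hand side grows by `ν λ_k ≥ 0`; since `Λ` is strictly
increasing, `J_k ≥ 0`.
-/

open Finset

lemma Lam_strictMono : StrictMono Lam := fun a b hab => by
  rw [Lam_eq_sigmoid, Lam_eq_sigmoid]
  gcongr

lemma nonneg_of_Lam_sub_le_Lam_add {a x : ℝ} (h : Lam (a - x) ≤ Lam (a + x)) : 0 ≤ x := by
  have := Lam_strictMono.le_iff_le.mp h
  linarith

section FinFilterSums

variable {M : Type*} [AddCommMonoid M] {N : ℕ}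

lemma Fin.sum_filter_val_lt_succ (f : Fin N → M) (k : Fin N) :
    ∑ j ∈ univ.filter (fun j : Fin N => (j : ℕ) < k + 1), f j
      = f k + ∑ j ∈ univ.filter (fun j : Fin N => (j : ℕ) < k), f j := by
  rw [← sum_insert (by simp)]
  congr 1
  ext j
  simp only [mem_insert, mem_filter, mem_univ, true_and, Fin.ext_iff]
  omega

lemma Fin.sum_filter_le_val (f : Fin N → M) (k : Fin N) :
    ∑ j ∈ univ.filter (fun j : Fin N => (k : ℕ) ≤ j), f j
      = f k + ∑ j ∈ univ.filter (fun j : Fin N => (k : ℕ) + 1 ≤ j), f j := by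
  rw [← sum_insert (by simp)]
  congr 1
  ext j
  simp only [mem_insert, mem_filter, mem_univ, true_and, Fin.ext_iff]
  omega

end FinFilterSums

theorem stmt_12_general (N : ℕ) (ν χ : ℝ) (lam : Fin N → ℝ)
    (hν : ν ∈ Set.Ico (0 : ℝ) 1)
    (hlam : ∀ j, 0 ≤ lam j)
    (J : Fin N → ℝ) (h : ℝ)
    (hmatch : ∀ k : ℕ, k ≤ N →
      Lam (h - (∑ j ∈ Finset.univ.filter (fun j : Fin N => (j : ℕ) < k), J j)
            + (∑ j ∈ Finset.univ.filter (fun j : Fin N => k ≤ (j : ℕ)), J j))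
        = ν * (∑ j ∈ Finset.univ.filter (fun j : Fin N => k ≤ (j : ℕ)), lam j)
          + (1 - ν) * χ) :
    ∀ k : Fin N, 0 ≤ J k := by
  intro k
  have hk := hmatch k k.is_le'
  have hk_succ := hmatch (k + 1) k.isLt
  rw [Fin.sum_filter_le_val J, Fin.sum_filter_le_val lam] at hk
  rw [Fin.sum_filter_val_lt_succ J] at hk_succ
  set below := ∑ j ∈ univ.filter (fun j : Fin N => (j : ℕ) < k), J j
  set above := ∑ j ∈ univ.filter (fun j : Fin N => (k : ℕ) + 1 ≤ j), J j
  set lamAbove := ∑ j ∈ univ.filter (fun j : Fin N => (k : ℕ) + 1 ≤ j), lam j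
  refine nonneg_of_Lam_sub_le_Lam_add (a := h - below + above) ?_
  calc Lam (h - below + above - J k) = ν * lamAbove + (1 - ν) * χ := by
        rw [← hk_succ]; congr 1; ring
    _ ≤ ν * (lam k + lamAbove) + (1 - ν) * χ := by
        gcongr
        · exact hν.1
        · exact le_add_of_nonneg_left (hlam k)
    _ = Lam (h - below + above + J k) := by
        rw [← hk]; congr 1; ring

theorem stmt_12 (N : ℕ) (hN : 1 ≤ N) (ν χ : ℝ) (lam : Fin N → ℝ)
    (hν : ν ∈ Set.Ico (0 : ℝ) 1) (hχ : χ ∈ Set.Ioo (0 : ℝ) 1)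
    (hlam : ∀ j, 0 ≤ lam j) (hsum : ∑ j, lam j = 1)
    (J : Fin N → ℝ) (h : ℝ)
    (hmatch : ∀ k : ℕ, k ≤ N →
      Lam (h - (∑ j ∈ Finset.univ.filter (fun j : Fin N => (j : ℕ) < k), J j)
            + (∑ j ∈ Finset.univ.filter (fun j : Fin N => k ≤ (j : ℕ)), J j))
        = ν * (∑ j ∈ Finset.univ.filter (fun j : Fin N => k ≤ (j : ℕ)), lam j)
          + (1 - ν) * χ) :
    ∀ k : Fin N, 0 ≤ J k :=
  stmt_12_general N ν χ lam hν hlam J h hmatch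
end

section
/- Fix N ≥ 1, h ∈ ℝ, and J_1,...,J_N ≥ 0. For k = 0,1,...,N set p_k = Λ( h - ∑_{j≤k} J_j + ∑_{j>k} J_j ), where Λ(x) = e^{2x}/(1+e^{2x}). Define ν = p_0 - p_N. Then: (i) 0 ≤ ν < 1; (ii) χ := p_N/(1-ν) satisfies 0 < χ < 1; (iii) if ν > 0, the numbers λ_k := (p_{k-1} - p_k)/ν for k = 1,...,N satisfy λ_k ≥ 0 and ∑_{k=1}^N λ_k = 1; and (iv) with these definitions the N+1 matching equations p_k = ν ∑_{j>k} λ_j + (1-ν)χ hold for every k = 0,1,...,N. Hence every Kinetic Ising Model variable with nonnegative couplings and strictly positive coupling sum corresponds to valid VDAR(1) parameters. -/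
/-!
With nonnegative couplings the argument of `Λ` decreases in `k`, so `p` is antitone on
`0, …, N` with values in `(0, 1)`. Hence `0 ≤ ν = p 0 - p N < 1`, the `λ_k` are nonnegative,
and the tail sums `∑_{j ≥ k} (p j - p (j + 1))` telescope to `p k - p N`; for `k = 0` this is
`ν`, and in general it gives the matching equations, also when `ν = 0`, where `p` is constant.
-/

open Finset

lemma Lam_pos (x : ℝ) : 0 < Lam x := Lam_eq_sigmoid x ▸ Real.sigmoid_pos _

lemma Lam_lt_one (x : ℝ) : Lam x < 1 := Lam_eq_sigmoid x ▸ Real.sigmoid_lt_one _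

lemma Lam_monotone : Monotone Lam := fun x y hxy => by
  simpa only [Lam_eq_sigmoid] using Real.sigmoid_monotone (by linarith : 2 * x ≤ 2 * y)

section FinSums

variable {M : Type*} {N : ℕ}

lemma Fin.sum_filter_le_eq_sum_Ico [AddCommMonoid M] (f : ℕ → M) (k : ℕ) :
    ∑ j ∈ univ.filter (fun j : Fin N => k ≤ (j : ℕ)), f j = ∑ j ∈ Ico k N, f j := by
  rw [sum_filter, Fin.sum_univ_eq_sum_range (fun j => if k ≤ j then f j else 0),
    ← sum_filter]
  congr 1
  ext j
  simp only [mem_filter, mem_range, mem_Ico]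
  omega

lemma Fin.sum_filter_le_sub_succ [AddCommGroup M] (f : ℕ → M) {k : ℕ} (hk : k ≤ N) :
    ∑ j ∈ univ.filter (fun j : Fin N => k ≤ (j : ℕ)), (f j - f (j + 1)) = f k - f N := by
  rw [Fin.sum_filter_le_eq_sum_Ico (fun j => f j - f (j + 1)), ← neg_sub, ← sum_Ico_sub f hk,
    ← sum_neg_distrib]
  simp only [neg_sub]

lemma Fin.sum_sub_succ [AddCommGroup M] (f : ℕ → M) :
    ∑ j : Fin N, (f j - f (j + 1)) = f 0 - f N := by
  simpa only [Nat.zero_le, filter_true] using Fin.sum_filter_le_sub_succ f N.zero_le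

variable [AddCommMonoid M] [PartialOrder M] [IsOrderedAddMonoid M] {J : Fin N → M}

lemma Fin.monotone_sum_filter_lt (hJ : ∀ j, 0 ≤ J j) :
    Monotone fun k : ℕ => ∑ j ∈ univ.filter (fun j : Fin N => (j : ℕ) < k), J j :=
  fun _ _ hkl => sum_le_sum_of_subset_of_nonneg
    (monotone_filter_right _ fun _ _ hj => lt_of_lt_of_le hj hkl) fun j _ _ => hJ j

lemma Fin.antitone_sum_filter_le (hJ : ∀ j, 0 ≤ J j) :
    Antitone fun k : ℕ => ∑ j ∈ univ.filter (fun j : Fin N => k ≤ (j : ℕ)), J j :=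
  fun _ _ hkl => sum_le_sum_of_subset_of_nonneg
    (monotone_filter_right _ fun _ _ hj => le_trans hkl hj) fun j _ _ => hJ j

end FinSums

lemma antitone_Lam_localField {N : ℕ} (h : ℝ) {J : Fin N → ℝ} (hJ : ∀ j, 0 ≤ J j) :
    Antitone fun k : ℕ => Lam (h - (∑ j ∈ univ.filter (fun j : Fin N => (j : ℕ) < k), J j)
      + (∑ j ∈ univ.filter (fun j : Fin N => k ≤ (j : ℕ)), J j)) :=
  fun _ _ hkl => Lam_monotone <| add_le_add
    (sub_le_sub_left (Fin.monotone_sum_filter_lt hJ hkl) h) (Fin.antitone_sum_filter_le hJ hkl)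

theorem stmt_13_general (N : ℕ) (h : ℝ) (J : Fin N → ℝ) (hJ : ∀ k, 0 ≤ J k)
    (p : ℕ → ℝ)
    (hp : ∀ k : ℕ, k ≤ N →
      p k = Lam (h - (∑ j ∈ Finset.univ.filter (fun j : Fin N => (j : ℕ) < k), J j)
                  + (∑ j ∈ Finset.univ.filter (fun j : Fin N => k ≤ (j : ℕ)), J j)))
    (ν : ℝ) (hν : ν = p 0 - p N) :
    (0 ≤ ν ∧ ν < 1) ∧
    (0 < p N / (1 - ν) ∧ p N / (1 - ν) < 1) ∧
    (0 < ν → (∀ k : Fin N, 0 ≤ (p k - p ((k : ℕ) + 1)) / ν) ∧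
      (∑ k : Fin N, (p (k : ℕ) - p ((k : ℕ) + 1)) / ν) = 1) ∧
    (∀ k : ℕ, k ≤ N →
      p k = ν * (∑ j ∈ Finset.univ.filter (fun j : Fin N => k ≤ (j : ℕ)),
                  (p (j : ℕ) - p ((j : ℕ) + 1)) / ν)
            + (1 - ν) * (p N / (1 - ν))) := by
  have hanti : ∀ k l, k ≤ l → l ≤ N → p l ≤ p k := fun k l hkl hl => by
    rw [hp k (hkl.trans hl), hp l hl]
    exact antitone_Lam_localField h hJ hkl
  have hpN_pos : 0 < p N := hp N le_rfl ▸ Lam_pos _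
  have hp0_lt_one : p 0 < 1 := hp 0 N.zero_le ▸ Lam_lt_one _
  have hν_nonneg : 0 ≤ ν := hν ▸ sub_nonneg.2 (hanti 0 N N.zero_le le_rfl)
  have hχ_denom : 0 < 1 - ν := by linarith
  refine ⟨⟨hν_nonneg, by linarith⟩,
    ⟨div_pos hpN_pos hχ_denom, (div_lt_one hχ_denom).2 (by linarith)⟩,
    fun hν_pos => ⟨fun k =>
      div_nonneg (sub_nonneg.2 (hanti k (k + 1) (Nat.le_succ _) k.2)) hν_pos.le, ?_⟩,
    fun k hk => ?_⟩
  · rw [← sum_div, Fin.sum_sub_succ, ← hν, div_self hν_pos.ne']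
  · have hflat : ν = 0 → p k - p N = 0 := fun hν0 => by
      linarith [hanti 0 k k.zero_le hk, hanti k N hk le_rfl]
    rw [← sum_div, Fin.sum_filter_le_sub_succ p hk, mul_div_cancel_of_imp' hflat,
      mul_div_cancel₀ _ hχ_denom.ne', sub_add_cancel]

theorem stmt_13 (N : ℕ) (hN : 1 ≤ N) (h : ℝ) (J : Fin N → ℝ) (hJ : ∀ k, 0 ≤ J k)
    (p : ℕ → ℝ)
    (hp : ∀ k : ℕ, k ≤ N →
      p k = Lam (h - (∑ j ∈ Finset.univ.filter (fun j : Fin N => (j : ℕ) < k), J j)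
                  + (∑ j ∈ Finset.univ.filter (fun j : Fin N => k ≤ (j : ℕ)), J j)))
    (ν : ℝ) (hν : ν = p 0 - p N) :
    (0 ≤ ν ∧ ν < 1) ∧
    (0 < p N / (1 - ν) ∧ p N / (1 - ν) < 1) ∧
    (0 < ν → (∀ k : Fin N, 0 ≤ (p k - p ((k : ℕ) + 1)) / ν) ∧
      (∑ k : Fin N, (p (k : ℕ) - p ((k : ℕ) + 1)) / ν) = 1) ∧
    (∀ k : ℕ, k ≤ N →
      p k = ν * (∑ j ∈ Finset.univ.filter (fun j : Fin N => k ≤ (j : ℕ)),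
                  (p (j : ℕ) - p ((j : ℕ) + 1)) / ν)
            + (1 - ν) * (p N / (1 - ν))) :=
  stmt_13_general N h J hJ p hp ν hν
end
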